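/- Let B₁ be a standard Brownian motion. For 0 < s, s' ≤ t, the absolute value of (2π)^{−2} ∫_{ℝ²} E[e^{iξ B₁(s)} e^{iξ' B₁(s')}] dξ dξ' is bounded by C / √((s ∧ s')·|s − s'|) for a universal constant C, and this bound is integrable over [0,t]². -/

import Mathlib

open MeasureTheory ProbabilityTheory

/-- A standard one-dimensional Brownian motion started at `0`. -/
def IsBrownianMotion {Ω : Type*} [MeasurableSpace Ω] (P : Measure Ω) (B : ℝ → Ω → ℝ) : Prop :=
  (∀ t, Measurable (B t)) ∧ (∀ ω, B 0 ω = 0) ∧ (∀ ω, Continuous fun t => B t ω) ∧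
  (∀ s t : ℝ, 0 ≤ s → s ≤ t →
    Measure.map (fun ω => B t ω - B s ω) P = gaussianReal 0 (Real.toNNReal (t - s))) ∧
  (∀ (n : ℕ) (τ : ℕ → ℝ), Monotone τ →
    iIndepFun (m := fun _ : Fin n => (inferInstance : MeasurableSpace ℝ))
      (fun (i : Fin n) ω => B (τ ((i : ℕ) + 1)) ω - B (τ (i : ℕ)) ω) P)

section Aux

open Complex NNReal ENNReal Set

lemma charFun_gauss (v : ℝ) (hv : 0 < v) (u : ℝ) :
    ∫ x : ℝ, Complex.exp (Complex.I * (u : ℂ) * (x : ℂ)) ∂(gaussianReal 0 v.toNNReal)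
      = Complex.exp (-(v * u ^ 2) / 2 : ℝ) := by
  have hv' : v.toNNReal ≠ 0 := by simp [Real.toNNReal_eq_zero]; linarith
  rw [gaussianReal_of_var_ne_zero 0 hv', gaussianPDF_def]
  have h0 : (fun x => ENNReal.ofReal (gaussianPDFReal 0 v.toNNReal x))
      = fun x => ((Real.toNNReal (gaussianPDFReal 0 v.toNNReal x) : ℝ≥0) : ℝ≥0∞) := rfl
  rw [h0, integral_withDensity_eq_integral_smul
    (measurable_gaussianPDFReal 0 v.toNNReal).real_toNNReal]
  have hvv : ((v.toNNReal : ℝ)) = v := Real.coe_toNNReal v hv.le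
  have hpos : (0:ℝ) < 2 * Real.pi * v := by positivity
  have key : ∀ x : ℝ, (Real.toNNReal (gaussianPDFReal 0 v.toNNReal x) : ℝ≥0)
        • Complex.exp (Complex.I * (u : ℂ) * (x : ℂ))
      = ((Real.sqrt (2 * Real.pi * v))⁻¹ : ℝ) •
        Complex.exp ((-(1/(2*v)) : ℂ) * (x:ℂ)^2 + (Complex.I * u) * (x:ℂ) + 0) := by
    intro x
    rw [NNReal.smul_def, Real.coe_toNNReal _ (gaussianPDFReal_nonneg 0 v.toNNReal x)]
    rw [gaussianPDFReal]
    simp only [hvv, sub_zero]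
    rw [mul_smul]
    congr 1
    rw [Complex.real_smul, Complex.ofReal_exp, ← Complex.exp_add]
    congr 1
    push_cast
    have hvne : (v:ℂ) ≠ 0 := by exact_mod_cast hv.ne'
    field_simp
    ring
  simp_rw [key, integral_smul]
  rw [integral_cexp_quadratic (by simp; positivity) (Complex.I * u) 0]
  have h1 : (Real.pi : ℂ) / -(-(1/(2*v)) : ℂ) = ((2 * Real.pi * v : ℝ) : ℂ) := by
    have hvne : (v:ℂ) ≠ 0 := by exact_mod_cast hv.ne'
    push_cast; field_simp
  have h2 : ((2 * Real.pi * v : ℝ) : ℂ) ^ ((1:ℂ)/2)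
      = ((Real.sqrt (2 * Real.pi * v) : ℝ) : ℂ) := by
    rw [show ((1:ℂ)/2) = (((1/2 : ℝ)) : ℂ) by norm_num,
      ← Complex.ofReal_cpow hpos.le, Real.rpow_def_of_pos hpos]
    rw [Real.sqrt_eq_rpow, Real.rpow_def_of_pos hpos]
  rw [h1, h2]
  have h3 : (0 : ℂ) - (Complex.I * u)^2 / (4 * (-(1/(2*v)) : ℂ))
      = ((-(v * u ^ 2) / 2 : ℝ) : ℂ) := by
    have hvne : (v:ℂ) ≠ 0 := by exact_mod_cast hv.ne'
    push_cast
    rw [mul_pow, Complex.I_sq]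
    field_simp
    ring
  rw [h3, Complex.real_smul, ← mul_assoc, ← Complex.ofReal_mul]
  rw [inv_mul_cancel₀ (Real.sqrt_ne_zero'.mpr hpos)]
  simp
-- charFun_gauss declared above
lemma exp_prod_eq {Ω : Type*} [MeasurableSpace Ω] (P : Measure Ω) [IsProbabilityMeasure P]
    (B : ℝ → Ω → ℝ) (hB : IsBrownianMotion P B) {s s' : ℝ} (hs : 0 < s) (hss' : s < s')
    (ξ ξ' : ℝ) :
    (∫ ω, Complex.exp (Complex.I * (ξ : ℂ) * (B s ω : ℂ)) *
        Complex.exp (Complex.I * (ξ' : ℂ) * (B s' ω : ℂ)) ∂P)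
      = Complex.exp (-(s * (ξ + ξ') ^ 2) / 2 : ℝ) *
          Complex.exp (-((s' - s) * ξ' ^ 2) / 2 : ℝ) := by
  obtain ⟨hmeas, hzero, -, hlaw, hindep⟩ := hB
  set X : Ω → ℝ := B s with hXdef
  set Y : Ω → ℝ := fun ω => B s' ω - B s ω with hYdef
  have hXm : Measurable X := hmeas s
  have hYm : Measurable Y := (hmeas s').sub (hmeas s)
  have hXlaw : Measure.map X P = gaussianReal 0 s.toNNReal := by
    have h := hlaw 0 s le_rfl hs.le
    have e : (fun ω => B s ω - B 0 ω) = X := by funext ω; simp [hzero ω, hXdef]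
    rwa [e, sub_zero] at h
  have hYlaw : Measure.map Y P = gaussianReal 0 (s' - s).toNNReal := hlaw s s' hs.le hss'.le
  -- independence
  have hI : IndepFun X Y P := by
    set τ : ℕ → ℝ := fun k => if k = 0 then 0 else if k = 1 then s else s' with hτ
    have hmono : Monotone τ := by
      apply monotone_nat_of_le_succ
      intro k
      match k with
      | 0 => simp [hτ]; exact hs.le
      | 1 => simp [hτ]; exact hss'.le
      | (k+2) => simp [hτ]
    have h2 := (hindep 2 τ hmono).indepFun (i := 0) (j := 1) (by decide)
    have h2' : IndepFun (fun ω => B s ω - B 0 ω) (fun ω => B s' ω - B s ω) P := h2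
    have e : (fun ω => B s ω - B 0 ω) = X := by funext ω; simp [hzero ω, hXdef]
    exact e ▸ h2'
  have hmap := (indepFun_iff_map_prod_eq_prod_map_map hXm.aemeasurable hYm.aemeasurable).mp hI
  have hint : (∫ ω, Complex.exp (Complex.I * (ξ : ℂ) * (B s ω : ℂ)) *
        Complex.exp (Complex.I * (ξ' : ℂ) * (B s' ω : ℂ)) ∂P)
      = ∫ ω, (fun p : ℝ × ℝ => Complex.exp (Complex.I * ((ξ + ξ' : ℝ) : ℂ) * (p.1 : ℂ)) *
          Complex.exp (Complex.I * (ξ' : ℂ) * (p.2 : ℂ))) (X ω, Y ω) ∂P := by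
    apply integral_congr_ae
    filter_upwards with ω
    rw [← Complex.exp_add, ← Complex.exp_add]
    congr 1
    have hxy : (B s' ω : ℂ) = (X ω : ℂ) + (Y ω : ℂ) := by
      simp only [hXdef, hYdef]; push_cast; ring
    rw [hxy]
    push_cast
    ring
  have hint2 : (∫ ω, (fun p : ℝ × ℝ => Complex.exp (Complex.I * ((ξ + ξ' : ℝ) : ℂ) * (p.1 : ℂ)) *
          Complex.exp (Complex.I * (ξ' : ℂ) * (p.2 : ℂ))) (X ω, Y ω) ∂P)
      = ∫ p : ℝ × ℝ, Complex.exp (Complex.I * ((ξ + ξ' : ℝ) : ℂ) * (p.1 : ℂ)) *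
          Complex.exp (Complex.I * (ξ' : ℂ) * (p.2 : ℂ))
            ∂(Measure.map (fun ω => (X ω, Y ω)) P) :=
    (integral_map (hXm.prodMk hYm).aemeasurable
      (Continuous.aestronglyMeasurable
        (show Continuous fun p : ℝ × ℝ =>
            Complex.exp (Complex.I * ((ξ + ξ' : ℝ) : ℂ) * (p.1 : ℂ)) *
              Complex.exp (Complex.I * (ξ' : ℂ) * (p.2 : ℂ)) by fun_prop))).symm
  rw [hint, hint2, hmap,
    integral_prod_mul (f := fun x : ℝ => Complex.exp (Complex.I * ((ξ + ξ' : ℝ) : ℂ) * (x : ℂ)))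
      (g := fun y : ℝ => Complex.exp (Complex.I * (ξ' : ℂ) * (y : ℂ))),
    hXlaw, hYlaw, charFun_gauss s hs (ξ + ξ'), charFun_gauss (s' - s) (by linarith) ξ']

lemma cpow_half_ofReal {x : ℝ} (hx : 0 ≤ x) :
    ((x : ℂ)) ^ ((1 : ℂ)/2) = ((Real.sqrt x : ℝ) : ℂ) := by
  rw [show ((1:ℂ)/2) = (((1/2 : ℝ)) : ℂ) by norm_num, ← Complex.ofReal_cpow hx,
    Real.sqrt_eq_rpow]

lemma sqrt_mul_sqrt_eq {a b : ℝ} (ha : 0 < a) (hb : 0 < b) (u v : ℝ)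
    (huv : u * v = (2 * Real.pi)^2 / (a * b)) (hu : 0 ≤ u) :
    Real.sqrt u * Real.sqrt v = 2 * Real.pi / Real.sqrt (a * b) := by
  rw [← Real.sqrt_mul hu, huv]
  have h : (2 * Real.pi)^2 / (a * b) = (2 * Real.pi / Real.sqrt (a * b))^2 := by
    rw [div_pow, Real.sq_sqrt (by positivity)]
  rw [h, Real.sqrt_sq (by positivity)]

lemma double_gauss_int₁ {a b : ℝ} (ha : 0 < a) (hb : 0 < b) :
    (∫ ξ : ℝ, ∫ ξ' : ℝ,
        Complex.exp (-(a * (ξ + ξ') ^ 2) / 2 : ℝ) * Complex.exp (-(b * ξ' ^ 2) / 2 : ℝ))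
      = ((2 * Real.pi / Real.sqrt (a * b) : ℝ) : ℂ) := by
  have hab : 0 < a + b := by linarith
  have inner : ∀ ξ : ℝ, (∫ ξ' : ℝ,
        Complex.exp (-(a * (ξ + ξ') ^ 2) / 2 : ℝ) * Complex.exp (-(b * ξ' ^ 2) / 2 : ℝ))
      = ((Real.sqrt (2 * Real.pi / (a + b)) : ℝ) : ℂ) *
          Complex.exp (-((a * b / (a + b)) * ξ ^ 2) / 2 : ℝ) := by
    intro ξ
    have hexp : ∀ ξ' : ℝ,
        Complex.exp (-(a * (ξ + ξ') ^ 2) / 2 : ℝ) * Complex.exp (-(b * ξ' ^ 2) / 2 : ℝ)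
          = Complex.exp (((-((a + b) / 2) : ℝ) : ℂ) * (ξ' : ℂ) ^ 2 +
              ((-(a * ξ) : ℝ) : ℂ) * (ξ' : ℂ) + ((-(a * ξ ^ 2) / 2 : ℝ) : ℂ)) := by
      intro ξ'
      rw [← Complex.exp_add]
      congr 1
      push_cast
      ring
    simp_rw [hexp]
    rw [integral_cexp_quadratic (show (((-((a + b) / 2) : ℝ) : ℂ)).re < 0 by rw [Complex.ofReal_re]; linarith [(by positivity : (0:ℝ) < (a+b)/2)])]
    have h1 : (Real.pi : ℂ) / -((-((a + b) / 2) : ℝ) : ℂ)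
        = ((2 * Real.pi / (a + b) : ℝ) : ℂ) := by
      push_cast
      field_simp
    have h2 : ((-(a * ξ ^ 2) / 2 : ℝ) : ℂ) -
          ((-(a * ξ) : ℝ) : ℂ) ^ 2 / (4 * ((-((a + b) / 2) : ℝ) : ℂ))
        = ((-((a * b / (a + b)) * ξ ^ 2) / 2 : ℝ) : ℂ) := by
      have hne : ((a : ℂ) + b) ≠ 0 := by
        have : (0:ℝ) < a + b := hab
        exact_mod_cast this.ne'
      have e : (4 : ℂ) * ((-((a + b) / 2) : ℝ) : ℂ) = -2 * ((a:ℂ) + b) := by push_cast; ring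
      rw [e]
      push_cast
      field_simp
      ring
    rw [h1, h2, cpow_half_ofReal (by positivity)]
  simp_rw [inner]
  rw [integral_const_mul]
  have hexp2 : ∀ ξ : ℝ, Complex.exp (-((a * b / (a + b)) * ξ ^ 2) / 2 : ℝ)
      = Complex.exp (((-(a * b / (a + b) / 2) : ℝ) : ℂ) * (ξ : ℂ) ^ 2 +
          ((0:ℝ) : ℂ) * (ξ : ℂ) + ((0:ℝ) : ℂ)) := by
    intro ξ
    congr 1
    push_cast
    ring
  simp_rw [hexp2]
  rw [integral_cexp_quadratic
    (show (((-(a * b / (a + b) / 2) : ℝ) : ℂ)).re < 0 by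
      rw [Complex.ofReal_re]; linarith [(by positivity : (0:ℝ) < a * b / (a + b) / 2)])]
  have h1 : (Real.pi : ℂ) / -((-(a * b / (a + b) / 2) : ℝ) : ℂ)
      = ((2 * Real.pi * (a + b) / (a * b) : ℝ) : ℂ) := by
    have h0 : ((a : ℂ) + b) ≠ 0 := by
      have : (0:ℝ) < a + b := hab
      exact_mod_cast this.ne'
    have ha' : (a : ℂ) ≠ 0 := by exact_mod_cast ha.ne'
    have hb' : (b : ℂ) ≠ 0 := by exact_mod_cast hb.ne'
    push_cast
    field_simp
  rw [h1, cpow_half_ofReal (by positivity)]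
  have h3 : ((0:ℝ):ℂ) - ((0:ℝ):ℂ)^2 / (4 * ((-(a * b / (a + b) / 2) : ℝ) : ℂ)) = 0 := by
    simp
  rw [h3, Complex.exp_zero, mul_one, ← Complex.ofReal_mul]
  norm_cast
  exact sqrt_mul_sqrt_eq ha hb _ _ (by field_simp) (by positivity)

lemma double_gauss_int₂ {a b : ℝ} (ha : 0 < a) (hb : 0 < b) :
    (∫ ξ : ℝ, ∫ ξ' : ℝ,
        Complex.exp (-(a * (ξ' + ξ) ^ 2) / 2 : ℝ) * Complex.exp (-(b * ξ ^ 2) / 2 : ℝ))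
      = ((2 * Real.pi / Real.sqrt (a * b) : ℝ) : ℂ) := by
  have inner : ∀ ξ : ℝ, (∫ ξ' : ℝ,
        Complex.exp (-(a * (ξ' + ξ) ^ 2) / 2 : ℝ) * Complex.exp (-(b * ξ ^ 2) / 2 : ℝ))
      = ((Real.sqrt (2 * Real.pi / a) : ℝ) : ℂ) * Complex.exp (-(b * ξ ^ 2) / 2 : ℝ) := by
    intro ξ
    have hexp : ∀ ξ' : ℝ,
        Complex.exp (-(a * (ξ' + ξ) ^ 2) / 2 : ℝ) * Complex.exp (-(b * ξ ^ 2) / 2 : ℝ)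
          = Complex.exp (((-(a / 2) : ℝ) : ℂ) * (ξ' : ℂ) ^ 2 +
              ((-(a * ξ) : ℝ) : ℂ) * (ξ' : ℂ) +
              ((-(a * ξ ^ 2) / 2 + -(b * ξ ^ 2) / 2 : ℝ) : ℂ)) := by
      intro ξ'
      rw [← Complex.exp_add]
      congr 1
      push_cast
      ring
    simp_rw [hexp]
    rw [integral_cexp_quadratic (show (((-(a / 2) : ℝ) : ℂ)).re < 0 by rw [Complex.ofReal_re]; linarith [(by positivity : (0:ℝ) < a/2)])]
    have h1 : (Real.pi : ℂ) / -((-(a / 2) : ℝ) : ℂ) = ((2 * Real.pi / a : ℝ) : ℂ) := by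
      push_cast
      field_simp
    have h2 : ((-(a * ξ ^ 2) / 2 + -(b * ξ ^ 2) / 2 : ℝ) : ℂ) -
          ((-(a * ξ) : ℝ) : ℂ) ^ 2 / (4 * ((-(a / 2) : ℝ) : ℂ))
        = ((-(b * ξ ^ 2) / 2 : ℝ) : ℂ) := by
      have ha' : (a : ℂ) ≠ 0 := by exact_mod_cast ha.ne'
      have e : (4 : ℂ) * ((-(a / 2) : ℝ) : ℂ) = -2 * (a:ℂ) := by push_cast; ring
      rw [e]
      push_cast
      field_simp
      ring
    rw [h1, h2, cpow_half_ofReal (by positivity)]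
  simp_rw [inner]
  rw [integral_const_mul]
  have hexp2 : ∀ ξ : ℝ, Complex.exp (-(b * ξ ^ 2) / 2 : ℝ)
      = Complex.exp (((-(b / 2) : ℝ) : ℂ) * (ξ : ℂ) ^ 2 + ((0:ℝ) : ℂ) * (ξ : ℂ) + ((0:ℝ) : ℂ)) := by
    intro ξ
    congr 1
    push_cast
    ring
  simp_rw [hexp2]
  rw [integral_cexp_quadratic (show (((-(b / 2) : ℝ) : ℂ)).re < 0 by rw [Complex.ofReal_re]; linarith [(by positivity : (0:ℝ) < b/2)])]
  have h1 : (Real.pi : ℂ) / -((-(b / 2) : ℝ) : ℂ) = ((2 * Real.pi / b : ℝ) : ℂ) := by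
    push_cast
    field_simp
  rw [h1, cpow_half_ofReal (by positivity)]
  have h3 : ((0:ℝ):ℂ) - ((0:ℝ):ℂ)^2 / (4 * ((-(b / 2) : ℝ) : ℂ)) = 0 := by simp
  rw [h3, Complex.exp_zero, mul_one, ← Complex.ofReal_mul]
  norm_cast
  exact sqrt_mul_sqrt_eq ha hb _ _ (by field_simp) (by positivity)

lemma rpow_half_nonpos {x : ℝ} (hx : x ≤ 0) : x ^ ((1:ℝ)/2) = 0 := by
  rcases hx.lt_or_eq with h | h
  · rw [Real.rpow_def_of_neg h, show ((1:ℝ)/2) * Real.pi = Real.pi / 2 by ring,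
      Real.cos_pi_div_two, mul_zero]
  · rw [h, Real.zero_rpow (by norm_num)]

lemma rpow_neg_half_nonpos {x : ℝ} (hx : x ≤ 0) : x ^ (-((1:ℝ)/2)) = 0 := by
  rcases hx.lt_or_eq with h | h
  · rw [Real.rpow_def_of_neg h, show (-((1:ℝ)/2)) * Real.pi = -(Real.pi / 2) by ring,
      Real.cos_neg, Real.cos_pi_div_two, mul_zero]
  · rw [h, Real.zero_rpow (by norm_num)]

lemma inv_sqrt_eq {y : ℝ} (hy : 0 ≤ y) : (Real.sqrt y)⁻¹ = y ^ (-((1:ℝ)/2)) := by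
  rw [Real.sqrt_eq_rpow, ← Real.rpow_neg hy]

lemma inv_sqrt_abs_eq (c x : ℝ) :
    (Real.sqrt |x - c|)⁻¹ = (x - c) ^ (-((1:ℝ)/2)) + (c - x) ^ (-((1:ℝ)/2)) := by
  rcases lt_trichotomy x c with h | h | h
  · rw [abs_of_neg (by linarith), rpow_neg_half_nonpos (by linarith : x - c ≤ 0), zero_add,
      neg_sub, inv_sqrt_eq (by linarith : (0:ℝ) ≤ c - x)]
  · subst h
    simp [rpow_neg_half_nonpos]
  · rw [abs_of_pos (by linarith), rpow_neg_half_nonpos (by linarith : c - x ≤ 0), add_zero,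
      inv_sqrt_eq (by linarith : (0:ℝ) ≤ x - c)]

lemma intervalInt (c T : ℝ) :
    IntervalIntegrable (fun x => (Real.sqrt |x - c|)⁻¹) volume 0 T := by
  have h1 : IntervalIntegrable (fun x : ℝ => (x - c) ^ (-((1:ℝ)/2))) volume 0 T := by
    have := (intervalIntegral.intervalIntegrable_rpow' (by norm_num : (-1:ℝ) < -((1:ℝ)/2))
      (a := 0 - c) (b := T - c)).comp_sub_right c
    simpa using this
  have h2 : IntervalIntegrable (fun x : ℝ => (c - x) ^ (-((1:ℝ)/2))) volume 0 T := by
    have := (intervalIntegral.intervalIntegrable_rpow' (by norm_num : (-1:ℝ) < -((1:ℝ)/2))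
      (a := c) (b := c - T)).comp_sub_left c
    simpa using this
  have h3 := h1.add h2
  rw [show (fun x => (Real.sqrt |x - c|)⁻¹)
      = fun x => (x - c) ^ (-((1:ℝ)/2)) + (c - x) ^ (-((1:ℝ)/2)) from funext (inv_sqrt_abs_eq c)]
  exact h3

lemma intInt (c T : ℝ) (hT : 0 ≤ T) :
    IntegrableOn (fun x => (Real.sqrt |x - c|)⁻¹) (Icc 0 T) :=
  (intervalIntegrable_iff_integrableOn_Icc_of_le hT).mp (intervalInt c T)

lemma intBound {c T : ℝ} (hT : 0 ≤ T) (hc1 : 0 ≤ c) (hc2 : c ≤ T) :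
    ∫ x in Icc 0 T, (Real.sqrt |x - c|)⁻¹ ≤ 4 * Real.sqrt T := by
  rw [integral_Icc_eq_integral_Ioc, ← intervalIntegral.integral_of_le hT]
  have h1 : IntervalIntegrable (fun x : ℝ => (x - c) ^ (-((1:ℝ)/2))) volume 0 T := by
    have := (intervalIntegral.intervalIntegrable_rpow' (by norm_num : (-1:ℝ) < -((1:ℝ)/2))
      (a := 0 - c) (b := T - c)).comp_sub_right c
    simpa using this
  have h2 : IntervalIntegrable (fun x : ℝ => (c - x) ^ (-((1:ℝ)/2))) volume 0 T := by
    have := (intervalIntegral.intervalIntegrable_rpow' (by norm_num : (-1:ℝ) < -((1:ℝ)/2))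
      (a := c) (b := c - T)).comp_sub_left c
    simpa using this
  have e : ∀ x : ℝ, (Real.sqrt |x - c|)⁻¹
      = (x - c) ^ (-((1:ℝ)/2)) + (c - x) ^ (-((1:ℝ)/2)) := inv_sqrt_abs_eq c
  simp_rw [e]
  rw [intervalIntegral.integral_add h1 h2]
  have hv1 : (∫ x in (0:ℝ)..T, (x - c) ^ (-((1:ℝ)/2))) ≤ 2 * Real.sqrt T := by
    rw [intervalIntegral.integral_comp_sub_right (fun x => x ^ (-((1:ℝ)/2))) c,
      integral_rpow (Or.inl (by norm_num)), zero_sub]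
    have hc' : (-c : ℝ) ^ (-((1:ℝ)/2) + 1) = 0 := by
      rw [show (-((1:ℝ)/2) + 1) = (1:ℝ)/2 by norm_num]
      exact rpow_half_nonpos (by linarith)
    have hTc : (T - c) ^ (-((1:ℝ)/2) + 1) ≤ Real.sqrt T := by
      rw [show (-((1:ℝ)/2) + 1) = (1:ℝ)/2 by norm_num, Real.sqrt_eq_rpow]
      exact Real.rpow_le_rpow (by linarith) (by linarith) (by norm_num)
    rw [hc']
    simp only [sub_zero]
    rw [div_le_iff₀ (by norm_num : (0:ℝ) < -((1:ℝ)/2) + 1)]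
    nlinarith [Real.sqrt_nonneg T]
  have hv2 : (∫ x in (0:ℝ)..T, (c - x) ^ (-((1:ℝ)/2))) ≤ 2 * Real.sqrt T := by
    rw [intervalIntegral.integral_comp_sub_left (fun x => x ^ (-((1:ℝ)/2))) c,
      integral_rpow (Or.inl (by norm_num))]
    have hc' : (c - T : ℝ) ^ (-((1:ℝ)/2) + 1) = 0 := by
      rw [show (-((1:ℝ)/2) + 1) = (1:ℝ)/2 by norm_num]
      exact rpow_half_nonpos (by linarith)
    have hTc : (c : ℝ) ^ (-((1:ℝ)/2) + 1) ≤ Real.sqrt T := by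
      rw [show (-((1:ℝ)/2) + 1) = (1:ℝ)/2 by norm_num, Real.sqrt_eq_rpow]
      exact Real.rpow_le_rpow (by linarith) (by linarith) (by norm_num)
    rw [hc']
    simp only [sub_zero]
    rw [div_le_iff₀ (by norm_num : (0:ℝ) < -((1:ℝ)/2) + 1)]
    nlinarith [Real.sqrt_nonneg T]
  linarith

lemma aux_sq (t : ℝ) (ht : 0 < t) :
    IntegrableOn (fun p : ℝ × ℝ => (Real.sqrt p.1)⁻¹ * (Real.sqrt |p.1 - p.2|)⁻¹)
      (Icc 0 t ×ˢ Icc 0 t) := by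
  rw [IntegrableOn, Measure.volume_eq_prod ℝ ℝ, ← Measure.prod_restrict]
  have hmeas : Measurable fun p : ℝ × ℝ => (Real.sqrt p.1)⁻¹ * (Real.sqrt |p.1 - p.2|)⁻¹ :=
    ((Real.continuous_sqrt.measurable.comp measurable_fst).inv).mul
      ((Real.continuous_sqrt.measurable.comp ((measurable_fst.sub measurable_snd).abs)).inv)
  rw [integrable_prod_iff hmeas.aestronglyMeasurable]
  refine ⟨Filter.Eventually.of_forall fun s => ?_, ?_⟩
  · have h := (intInt s t ht.le).const_mul (Real.sqrt s)⁻¹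
    have e : (fun s' : ℝ => (Real.sqrt s)⁻¹ * (Real.sqrt |s - s'|)⁻¹)
        = fun x => (Real.sqrt s)⁻¹ * (Real.sqrt |x - s|)⁻¹ := by
      funext x; rw [abs_sub_comm]
    exact e ▸ h
  · have hg : Integrable (fun s : ℝ => (Real.sqrt s)⁻¹ * (4 * Real.sqrt t))
        (volume.restrict (Icc 0 t)) := by
      have h0 := (intInt 0 t ht.le).mul_const (4 * Real.sqrt t)
      refine h0.congr ?_
      filter_upwards [ae_restrict_mem measurableSet_Icc] with x hx
      rw [sub_zero, _root_.abs_of_nonneg hx.1]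
    refine Integrable.mono' hg hmeas.aestronglyMeasurable.norm.integral_prod_right' ?_
    filter_upwards [ae_restrict_mem measurableSet_Icc] with s hs
    rw [Real.norm_of_nonneg (integral_nonneg fun y => norm_nonneg _)]
    have e1 : (∫ y in Icc 0 t, ‖(Real.sqrt s)⁻¹ * (Real.sqrt |s - y|)⁻¹‖)
        = (Real.sqrt s)⁻¹ * ∫ y in Icc 0 t, (Real.sqrt |y - s|)⁻¹ := by
      rw [← integral_const_mul]
      apply integral_congr_ae
      filter_upwards with y
      rw [Real.norm_of_nonneg (by positivity), abs_sub_comm]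
    calc (∫ y in Icc 0 t, ‖(Real.sqrt s)⁻¹ * (Real.sqrt |s - y|)⁻¹‖)
        = (Real.sqrt s)⁻¹ * ∫ y in Icc 0 t, (Real.sqrt |y - s|)⁻¹ := e1
      _ ≤ (Real.sqrt s)⁻¹ * (4 * Real.sqrt t) :=
          mul_le_mul_of_nonneg_left (intBound ht.le hs.1 hs.2) (by positivity)

lemma sq_integrable (t : ℝ) (ht : 0 < t) :
    IntegrableOn (fun p : ℝ × ℝ => 1 / Real.sqrt (min p.1 p.2 * |p.1 - p.2|))
      (Icc 0 t ×ˢ Icc 0 t) := by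
  have h1 := aux_sq t ht
  have h2 : IntegrableOn (fun p : ℝ × ℝ => (Real.sqrt p.2)⁻¹ * (Real.sqrt |p.1 - p.2|)⁻¹)
      (Icc 0 t ×ˢ Icc 0 t) := by
    have h1' := h1
    rw [IntegrableOn, Measure.volume_eq_prod ℝ ℝ, ← Measure.prod_restrict] at h1' ⊢
    refine h1'.swap.congr (Filter.Eventually.of_forall fun p => ?_)
    show (Real.sqrt p.2)⁻¹ * (Real.sqrt |p.2 - p.1|)⁻¹ = _
    rw [abs_sub_comm]
  have hm : Measurable fun p : ℝ × ℝ => 1 / Real.sqrt (min p.1 p.2 * |p.1 - p.2|) :=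
    measurable_const.div (Real.continuous_sqrt.measurable.comp
      ((measurable_fst.min measurable_snd).mul ((measurable_fst.sub measurable_snd).abs)))
  refine (h1.add h2).mono' hm.aestronglyMeasurable ?_
  filter_upwards [ae_restrict_mem (measurableSet_Icc.prod measurableSet_Icc)] with p hp
  obtain ⟨⟨h01, h1t⟩, h02, h2t⟩ := hp
  have hmin : 0 ≤ min p.1 p.2 := le_min h01 h02
  rw [Real.norm_of_nonneg (by positivity), Pi.add_apply, one_div, Real.sqrt_mul hmin, mul_inv]
  rcases le_total p.1 p.2 with h | h
  · rw [min_eq_left h]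
    have hnn : 0 ≤ (Real.sqrt p.2)⁻¹ * (Real.sqrt |p.1 - p.2|)⁻¹ := by positivity
    linarith
  · rw [min_eq_right h]
    have hnn : 0 ≤ (Real.sqrt p.1)⁻¹ * (Real.sqrt |p.1 - p.2|)⁻¹ := by positivity
    linarith

end Aux

/-- the Gaussian double Fourier integral
`(2π)⁻² ∫∫ E[e^{iξB(s)} e^{iξ'B(s')}] dξ dξ'` is bounded by `C/√((s∧s')|s-s'|)`,
and this bound is integrable over `[0,t]²`. -/
theorem gaussian_char_fn_bound {Ω : Type*} [MeasurableSpace Ω]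
    (P : Measure Ω) [IsProbabilityMeasure P]
    (B : ℝ → Ω → ℝ) (hB : IsBrownianMotion P B) (t : ℝ) (ht : 0 < t) :
    ∃ C : ℝ, 0 < C ∧
      (∀ s s' : ℝ, 0 < s → s ≤ t → 0 < s' → s' ≤ t → s ≠ s' →
        ‖(2 * Real.pi : ℂ) ^ (-(2 : ℤ)) *
          ∫ ξ : ℝ, ∫ ξ' : ℝ, ∫ ω,
            Complex.exp (Complex.I * (ξ : ℂ) * (B s ω : ℂ)) *
              Complex.exp (Complex.I * (ξ' : ℂ) * (B s' ω : ℂ)) ∂P‖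
          ≤ C / Real.sqrt (min s s' * |s - s'|)) ∧
      IntegrableOn (fun p : ℝ × ℝ => 1 / Real.sqrt (min p.1 p.2 * |p.1 - p.2|))
        (Set.Icc 0 t ×ˢ Set.Icc 0 t) := by
  refine ⟨1, one_pos, ?_, sq_integrable t ht⟩
  intro s s' hs hst hs' hs't hne
  have hπ : (1:ℝ) ≤ 2 * Real.pi := by
    have := Real.pi_gt_three
    linarith
  have h2π : (0:ℝ) < 2 * Real.pi := by positivity
  rcases hne.lt_or_gt with h | h
  · have e := exp_prod_eq P B hB hs h
    simp only [e]
    rw [double_gauss_int₁ hs (by linarith : (0:ℝ) < s' - s)]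
    rw [min_eq_left h.le, abs_of_neg (by linarith : s - s' < 0), neg_sub]
    set X := Real.sqrt (s * (s' - s)) with hXdef
    have hX : 0 < X := Real.sqrt_pos.mpr (by nlinarith)
    rw [norm_mul, norm_zpow, show ((2 * Real.pi : ℂ)) = ((2 * Real.pi : ℝ) : ℂ) by norm_cast,
      Complex.norm_real, Complex.norm_real, Real.norm_eq_abs, Real.norm_eq_abs, abs_of_pos h2π,
      abs_of_pos (by positivity : (0:ℝ) < 2 * Real.pi / X)]
    rw [zpow_neg, zpow_two]
    have e1 : ((2 * Real.pi) * (2 * Real.pi))⁻¹ * (2 * Real.pi / X)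
        = (2 * Real.pi)⁻¹ / X := by
      field_simp
    rw [e1]
    gcongr
    exact inv_le_one_of_one_le₀ hπ
  · have e2 : ∀ ξ ξ' : ℝ, (∫ ω, Complex.exp (Complex.I * (ξ : ℂ) * (B s ω : ℂ)) *
          Complex.exp (Complex.I * (ξ' : ℂ) * (B s' ω : ℂ)) ∂P)
        = Complex.exp (-(s' * (ξ' + ξ) ^ 2) / 2 : ℝ) *
            Complex.exp (-((s - s') * ξ ^ 2) / 2 : ℝ) := by
      intro ξ ξ'
      rw [← exp_prod_eq P B hB hs' h ξ' ξ]
      apply integral_congr_ae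
      filter_upwards with ω
      ring
    simp only [e2]
    rw [double_gauss_int₂ hs' (by linarith : (0:ℝ) < s - s')]
    rw [min_eq_right h.le, abs_of_pos (by linarith : (0:ℝ) < s - s')]
    set X := Real.sqrt (s' * (s - s')) with hXdef
    have hX : 0 < X := Real.sqrt_pos.mpr (by nlinarith)
    rw [norm_mul, norm_zpow, show ((2 * Real.pi : ℂ)) = ((2 * Real.pi : ℝ) : ℂ) by norm_cast,
      Complex.norm_real, Complex.norm_real, Real.norm_eq_abs, Real.norm_eq_abs, abs_of_pos h2π,
      abs_of_pos (by positivity : (0:ℝ) < 2 * Real.pi / X)]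
    rw [zpow_neg, zpow_two]
    have e1 : ((2 * Real.pi) * (2 * Real.pi))⁻¹ * (2 * Real.pi / X)
        = (2 * Real.pi)⁻¹ / X := by
      field_simp
    rw [e1]
    gcongr
    exact inv_le_one_of_one_le₀ hπ
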